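/- arXiv:2312.13939 — 3 statements merged into one kernel-verified Lean document; each statement's English description precedes it below -/
import Mathlib

section
/- (Azzalini's lemma) For any real constants q, μ, σ > 0, and c: ∫_{-∞}^{∞} Φ(qη + c) · (1/√(2πσ²)) exp(-(η-μ)²/(2σ²)) dη = Φ((qμ + c)/√(1 + q²σ²)), where Φ is the standard normal cdf. -/
open MeasureTheory Real Set

noncomputable def stdPdf (x : ℝ) : ℝ := Real.exp (-(x^2)/2) / Real.sqrt (2 * Real.pi)

noncomputable def stdCdf (x : ℝ) : ℝ := ∫ t in Set.Iic x, stdPdf t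

/-!
Write `Φ(x) = P(Z ≤ x)` for `Z ∼ N(0, 1)`. Integrating `Φ(qη + c)` against the `N(μ, σ²)`
density in `η` gives `P(Z - qX ≤ c)` for `X ∼ N(μ, σ²)` independent of `Z`, that is, the cdf at
`c` of the convolution `N(0, 1) ∗ N(-qμ, q²σ²) = N(-qμ, 1 + q²σ²)`; standardising gives the
right-hand side.
-/

open ProbabilityTheory NNReal

lemma measure_Iic_conv (μ ν : Measure ℝ) [SFinite μ] [SFinite ν] (x : ℝ) :
    (μ ∗ ν) (Iic x) = ∫⁻ y, μ (Iic (x - y)) ∂ν := by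
  rw [Measure.conv, Measure.map_apply (by fun_prop) measurableSet_Iic,
    Measure.prod_apply_symm (measurableSet_Iic.preimage (by fun_prop))]
  congr! with y
  ext a
  simp [le_sub_iff_add_le]

lemma cdf_conv (μ ν : Measure ℝ) [IsProbabilityMeasure μ] [IsProbabilityMeasure ν] (x : ℝ) :
    cdf (μ ∗ ν) x = ∫ y, cdf μ (x - y) ∂ν := by
  have h_anti : Antitone fun y ↦ μ (Iic (x - y)) := fun _ _ hab ↦
    measure_mono (Iic_subset_Iic.2 (sub_le_sub_left hab x))
  simp_rw [cdf_eq_real, measureReal_def, measure_Iic_conv]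
  exact (integral_toReal h_anti.measurable.aemeasurable
    (ae_of_all _ fun _ ↦ measure_lt_top _ _)).symm

lemma gaussianPDFReal_zero_one : gaussianPDFReal 0 1 = stdPdf := by
  ext x
  simp [gaussianPDFReal, stdPdf, div_eq_inv_mul, mul_comm]

lemma stdCdf_eq_cdf_gaussianReal (x : ℝ) : stdCdf x = cdf (gaussianReal 0 1) x := by
  rw [cdf_eq_real, measureReal_def, gaussianReal_apply_eq_integral _ one_ne_zero,
    ENNReal.toReal_ofReal (setIntegral_nonneg measurableSet_Iic fun _ _ ↦
      gaussianPDFReal_nonneg _ _ _),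
    gaussianPDFReal_zero_one, stdCdf]

lemma gaussianReal_eq_map_affine (m : ℝ) (v : ℝ≥0) :
    gaussianReal m v = ((gaussianReal 0 1).map (√(v : ℝ) * ·)).map (· + m) := by
  rw [gaussianReal_map_const_mul, gaussianReal_map_add_const, mul_zero, zero_add, mul_one]
  congr
  ext
  simp

lemma cdf_gaussianReal (m : ℝ) {v : ℝ≥0} (hv : v ≠ 0) (x : ℝ) :
    cdf (gaussianReal m v) x = cdf (gaussianReal 0 1) ((x - m) / √(v : ℝ)) := by
  have hs : 0 < √(v : ℝ) := by positivity
  rw [cdf_eq_real, cdf_eq_real, gaussianReal_eq_map_affine,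
    Measure.map_map (by fun_prop) (by fun_prop),
    map_measureReal_apply (by fun_prop) measurableSet_Iic]
  congr 1
  ext y
  simp [le_div_iff₀ hs, le_sub_iff_add_le, mul_comm]

/-- Azzalini's lemma. -/
theorem azzalini_lemma (q c μ σ : ℝ) (hσ : 0 < σ) :
    (∫ η : ℝ, stdCdf (q*η + c) *
        ((1 / Real.sqrt (2 * Real.pi * σ^2)) * Real.exp (-(η - μ)^2 / (2*σ^2))))
    = stdCdf ((q*μ + c) / Real.sqrt (1 + q^2*σ^2)) := by
  set v : ℝ≥0 := .mk (σ ^ 2) (sq_nonneg σ)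
  have hv : v ≠ 0 := NNReal.coe_ne_zero.mp (pow_pos hσ 2).ne'
  have h_meas : Measurable fun y ↦ cdf (gaussianReal 0 1) (c - y) :=
    (monotone_cdf _).measurable.comp (measurable_const.sub measurable_id)
  calc (∫ η : ℝ, stdCdf (q*η + c) *
        ((1 / Real.sqrt (2 * Real.pi * σ^2)) * Real.exp (-(η - μ)^2 / (2*σ^2))))
      = ∫ η, cdf (gaussianReal 0 1) (c - (-q) * η) ∂gaussianReal μ v := by
        rw [integral_gaussianReal_eq_integral_smul hv]
        congr 1 with η
        rw [gaussianPDFReal, smul_eq_mul, stdCdf_eq_cdf_gaussianReal, NNReal.coe_mk]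
        ring_nf
    _ = ∫ y, cdf (gaussianReal 0 1) (c - y) ∂(gaussianReal μ v).map ((-q) * ·) :=
        (integral_map (by fun_prop) h_meas.aestronglyMeasurable).symm
    _ = cdf (gaussianReal (0 + -q * μ) (1 + .mk ((-q) ^ 2) (sq_nonneg _) * v)) c := by
        rw [gaussianReal_map_const_mul, ← cdf_conv, gaussianReal_conv_gaussianReal]
    _ = stdCdf ((q*μ + c) / Real.sqrt (1 + q^2*σ^2)) := by
        rw [cdf_gaussianReal _ (by simp [hv]), stdCdf_eq_cdf_gaussianReal]
        simp only [NNReal.coe_add, NNReal.coe_mul, NNReal.coe_mk, NNReal.coe_one, v, neg_sq]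
        ring_nf
end

section
/- In the stochastic frontier model with σ²_{ε,1} = σ²_V + σ²_U − 2ρ_Vσ_Vρ_Uσ_U and σ²_{ε,2} = σ²_V + σ²_U + 2ρ_Vσ_Vρ_Uσ_U, setting ζ(ρ_U) = √(1 + 4ρ_Vσ_Vρ_Uσ_U/σ²_{ε,1}) exp(−2ε²ρ_Vσ_Vρ_Uσ_U/(σ²_{ε,1}σ²_{ε,2})), one has ζ(0) = 1, ζ'(0) = (2ρ_Vσ_Vσ_U/σ²)(1 − ε²/σ²) and ζ''(0) = (ζ'(0))², where σ² = σ²_V + σ²_U. -/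
noncomputable def zhf (A k c : ℝ) (ρ : ℝ) : ℝ :=
  (Real.log (A + 2*k*ρ) - Real.log (A - 2*k*ρ))/2 - 2*c*k*ρ/((A - 2*k*ρ)*(A + 2*k*ρ))

noncomputable def zh1 (A k c : ℝ) (ρ : ℝ) : ℝ :=
  k/(A + 2*k*ρ) + k/(A - 2*k*ρ) - 2*c*k*(A^2 + 4*k^2*ρ^2)/(A^2 - 4*k^2*ρ^2)^2

lemma zd_add (A k ρ : ℝ) : HasDerivAt (fun x => A + 2*k*x) (2*k) ρ := by
  simpa using ((hasDerivAt_id ρ).const_mul (2*k)).const_add A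

lemma zd_sub (A k ρ : ℝ) : HasDerivAt (fun x => A - 2*k*x) (-(2*k)) ρ := by
  simpa using ((hasDerivAt_id ρ).const_mul (2*k)).const_sub A

lemma zsqrt_eq_exp {x : ℝ} (hx : 0 < x) : Real.sqrt x = Real.exp (Real.log x / 2) := by
  rw [Real.sqrt_eq_rpow, Real.rpow_def_of_pos hx, mul_one_div]

lemma hasDerivAt_zhf (A k c ρ : ℝ) (hm : A - 2*k*ρ ≠ 0) (hp : A + 2*k*ρ ≠ 0) :
    HasDerivAt (zhf A k c) (zh1 A k c ρ) ρ := by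
  have d1 := zd_add A k ρ
  have d2 := zd_sub A k ρ
  have l1 := d1.log hp
  have l2 := d2.log hm
  have num : HasDerivAt (fun x : ℝ => 2*c*k*x) (2*c*k) ρ := by
    simpa using (hasDerivAt_id ρ).const_mul (2*c*k)
  have den := d2.mul d1
  have hD : (A - 2*k*ρ)*(A + 2*k*ρ) ≠ 0 := mul_ne_zero hm hp
  have H := ((l1.sub l2).div_const 2).sub (num.div den hD)
  have hq : A^2 - 4*k^2*ρ^2 ≠ 0 := fun h => hD (by linear_combination h)
  refine H.congr_deriv ?_
  unfold zh1
  simp only [Pi.mul_apply]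
  rw [show (A^2 - 4*k^2*ρ^2)^2 = ((A - 2*k*ρ)*(A + 2*k*ρ))^2 by ring]
  field_simp
  ring

lemma hasDerivAt_zh1_zero (A k c : ℝ) (hA : A ≠ 0) :
    HasDerivAt (zh1 A k c) 0 0 := by
  have d1 := zd_add A k 0
  have d2 := zd_sub A k 0
  have hp : A + 2*k*0 ≠ 0 := by simpa using hA
  have hm : A - 2*k*0 ≠ 0 := by simpa using hA
  have t1 := (hasDerivAt_const (0:ℝ) k).div d1 hp
  have t2 := (hasDerivAt_const (0:ℝ) k).div d2 hm
  have num := (((hasDerivAt_pow 2 (0:ℝ)).const_mul (4*k^2)).const_add (A^2)).const_mul (2*c*k)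
  have denb := ((hasDerivAt_pow 2 (0:ℝ)).const_mul (4*k^2)).const_sub (A^2)
  have den := denb.pow 2
  have hden : (A^2 - 4*k^2*(0:ℝ)^2)^2 ≠ 0 := by
    have h : (A^2 - 4*k^2*(0:ℝ)^2)^2 = A^4 := by ring
    rw [h]; exact pow_ne_zero 4 hA
  have t3 := num.div den hden
  have H := (t1.add t2).sub t3
  refine H.congr_deriv ?_
  simp
  ring

theorem zkey (A k c : ℝ) (hA : 0 < A) (ζ : ℝ → ℝ)
    (hζ : ∀ ρ, ζ ρ = Real.sqrt (1 + 4*k*ρ / (A - 2*k*ρ)) *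
        Real.exp (-(2*c*k*ρ) / ((A - 2*k*ρ) * (A + 2*k*ρ)))) :
    ζ 0 = 1 ∧ deriv ζ 0 = 2*k/A - 2*c*k/A^2 ∧ deriv (deriv ζ) 0 = (deriv ζ 0)^2 := by
  have hA' : A ≠ 0 := hA.ne'
  set δ := A/(2*|k|+1) with hδdef
  have hδ : 0 < δ := div_pos hA (by positivity)
  have hball : ∀ ρ ∈ Metric.ball (0:ℝ) δ, 0 < A - 2*k*ρ ∧ 0 < A + 2*k*ρ := by
    intro ρ hρ
    have h1 : |ρ| < δ := by simpa [Real.dist_eq] using hρ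
    have h2 : |2*k*ρ| < A := by
      have he : |2*k*ρ| = 2 * |k| * |ρ| := by
        rw [abs_mul, abs_mul, abs_two]
      rw [he]
      calc 2 * |k| * |ρ| ≤ (2 * |k| + 1) * |ρ| := by nlinarith [abs_nonneg ρ]
        _ < (2 * |k| + 1) * δ := mul_lt_mul_of_pos_left h1 (by positivity)
        _ = A := by
            rw [hδdef, mul_div_cancel₀]
            positivity
    obtain ⟨hl, hr⟩ := abs_lt.mp h2
    constructor <;> linarith
  have heq : ∀ ρ ∈ Metric.ball (0:ℝ) δ, ζ ρ = Real.exp (zhf A k c ρ) := by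
    intro ρ hρ
    obtain ⟨hm, hp⟩ := hball ρ hρ
    rw [hζ ρ]
    have e1 : 1 + 4*k*ρ/(A-2*k*ρ) = (A+2*k*ρ)/(A-2*k*ρ) := by
      rw [eq_div_iff hm.ne', add_mul, div_mul_cancel₀ _ hm.ne']; ring
    rw [e1]
    have hpos : 0 < (A+2*k*ρ)/(A-2*k*ρ) := div_pos hp hm
    rw [zsqrt_eq_exp hpos, ← Real.exp_add]
    congr 1
    rw [Real.log_div hp.ne' hm.ne']
    unfold zhf
    ring
  have hmem : Metric.ball (0:ℝ) δ ∈ nhds (0:ℝ) := Metric.ball_mem_nhds 0 hδ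
  have hder : ∀ ρ ∈ Metric.ball (0:ℝ) δ,
      HasDerivAt ζ (Real.exp (zhf A k c ρ) * zh1 A k c ρ) ρ := by
    intro ρ hρ
    obtain ⟨hm, hp⟩ := hball ρ hρ
    have H := (hasDerivAt_zhf A k c ρ hm.ne' hp.ne').exp
    exact H.congr_of_eventuallyEq
      (Filter.eventuallyEq_of_mem (Metric.isOpen_ball.mem_nhds hρ) heq)
  have h00 : zhf A k c 0 = 0 := by simp [zhf]
  have hin : (0:ℝ) ∈ Metric.ball (0:ℝ) δ := Metric.mem_ball_self hδ
  have hz0 : ζ 0 = 1 := by rw [heq 0 hin, h00, Real.exp_zero]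
  have hd0 : deriv ζ 0 = zh1 A k c 0 := by
    rw [(hder 0 hin).deriv, h00, Real.exp_zero, one_mul]
  have h10 : zh1 A k c 0 = 2*k/A - 2*c*k/A^2 := by
    unfold zh1
    field_simp
    ring_nf
    field_simp
  refine ⟨hz0, by rw [hd0, h10], ?_⟩
  have hm0 : A - 2*k*0 ≠ 0 := by simpa using hA'
  have hp0 : A + 2*k*0 ≠ 0 := by simpa using hA'
  have H2 := ((hasDerivAt_zhf A k c 0 hm0 hp0).exp).mul (hasDerivAt_zh1_zero A k c hA')
  have hdevent : deriv ζ =ᶠ[nhds 0] fun ρ => Real.exp (zhf A k c ρ) * zh1 A k c ρ :=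
    Filter.eventuallyEq_of_mem hmem (fun ρ hρ => (hder ρ hρ).deriv)
  have := (H2.congr_of_eventuallyEq hdevent).deriv
  rw [this, h00, Real.exp_zero, hd0]
  ring

/-- Properties of ζ(ρ_U) at ρ_U = 0 in the stochastic frontier model. -/
theorem zeta_derivatives_at_zero (σV σU ρV ε : ℝ) (hσV : 0 < σV) (hσU : 0 < σU)
    (hρV : ρV ∈ Set.Ioo (-1 : ℝ) 1)
    (s1 s2 ζ : ℝ → ℝ)
    (hs1 : ∀ ρ, s1 ρ = σV^2 + σU^2 - 2*ρV*σV*ρ*σU)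
    (hs2 : ∀ ρ, s2 ρ = σV^2 + σU^2 + 2*ρV*σV*ρ*σU)
    (hζ : ∀ ρ, ζ ρ = Real.sqrt (1 + 4*ρV*σV*ρ*σU / s1 ρ) *
        Real.exp (-(2*ε^2*ρV*σV*ρ*σU) / (s1 ρ * s2 ρ))) :
    ζ 0 = 1 ∧
    deriv ζ 0 = (2*ρV*σV*σU/(σV^2 + σU^2)) * (1 - ε^2/(σV^2 + σU^2)) ∧
    deriv (deriv ζ) 0 = (deriv ζ 0)^2 := by
  have hA : 0 < σV^2 + σU^2 := by positivity
  have hζ' : ∀ ρ, ζ ρ = Real.sqrt (1 + 4*(ρV*σV*σU)*ρ / ((σV^2+σU^2) - 2*(ρV*σV*σU)*ρ)) *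
      Real.exp (-(2*ε^2*(ρV*σV*σU)*ρ) / (((σV^2+σU^2) - 2*(ρV*σV*σU)*ρ) * ((σV^2+σU^2) + 2*(ρV*σV*σU)*ρ))) := by
    intro ρ
    rw [hζ ρ]
    have e1 : 1 + 4*ρV*σV*ρ*σU / s1 ρ
        = 1 + 4*(ρV*σV*σU)*ρ / ((σV^2+σU^2) - 2*(ρV*σV*σU)*ρ) := by
      rw [hs1]; ring_nf
    have e2 : -(2*ε^2*ρV*σV*ρ*σU) / (s1 ρ * s2 ρ)
        = -(2*ε^2*(ρV*σV*σU)*ρ) / (((σV^2+σU^2) - 2*(ρV*σV*σU)*ρ) * ((σV^2+σU^2) + 2*(ρV*σV*σU)*ρ)) := by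
      rw [hs1, hs2]; ring_nf
    rw [e1, e2]
  obtain ⟨h0, h1, h2⟩ := zkey (σV^2+σU^2) (ρV*σV*σU) (ε^2) hA ζ hζ'
  refine ⟨h0, ?_, h2⟩
  rw [h1]
  field_simp
end

section
/- Let X follow an extended skew-normal distribution ESN(0, σ, α, τ) with density f(x) = Φ(τ/√(1−δ²) + (δ/√(1−δ²)) x/σ)/Φ(τ) · (1/σ)φ(x/σ), where δ ∈ (−1,1). Then E[X] = σδ·φ(τ)/Φ(τ) and E[X³] = (σδ)³(τ² − 1)φ(τ)/Φ(τ) + 3σ²·σδ·φ(τ)/Φ(τ). -/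
open MeasureTheory Real Set Filter

lemma stdPdf_eq (x : ℝ) : stdPdf x = (Real.sqrt (2*Real.pi))⁻¹ * Real.exp (-(1/2) * x^2) := by
  rw [stdPdf]; ring_nf

lemma continuous_stdPdf : Continuous stdPdf := by
  unfold stdPdf; fun_prop

lemma stdPdf_pos (x : ℝ) : 0 < stdPdf x :=
  div_pos (Real.exp_pos _) (Real.sqrt_pos.2 (by positivity))

lemma stdPdf_funext : stdPdf = fun x => (Real.sqrt (2*Real.pi))⁻¹ * Real.exp (-(1/2) * x^2) :=
  funext stdPdf_eq

lemma integrable_stdPdf : Integrable stdPdf := by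
  rw [stdPdf_funext]
  exact (integrable_exp_neg_mul_sq (by norm_num : (0:ℝ) < 1/2)).const_mul _

lemma integral_stdPdf : ∫ x, stdPdf x = 1 := by
  simp_rw [stdPdf_eq]
  rw [MeasureTheory.integral_const_mul, integral_gaussian]
  rw [show (π / (1/2)) = 2 * π by ring]
  rw [inv_mul_cancel₀ (by positivity)]

lemma integrable_pow_mul_stdPdf (n : ℕ) : Integrable (fun x => x^n * stdPdf x) := by
  simp_rw [stdPdf_eq]
  have h := integrable_rpow_mul_exp_neg_mul_sq (by norm_num : (0:ℝ) < 1/2)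
    (s := n) (by exact_mod_cast neg_one_lt_zero.trans_le (Nat.cast_nonneg n))
  simp_rw [Real.rpow_natCast] at h
  have := h.const_mul (Real.sqrt (2*Real.pi))⁻¹
  apply this.congr
  filter_upwards with x; ring

lemma stdCdf_nonneg (x : ℝ) : 0 ≤ stdCdf x :=
  setIntegral_nonneg measurableSet_Iic (fun t _ => (stdPdf_pos t).le)

lemma stdCdf_le_one (x : ℝ) : stdCdf x ≤ 1 := by
  rw [← integral_stdPdf]
  exact setIntegral_le_integral integrable_stdPdf
    (Filter.Eventually.of_forall fun t => (stdPdf_pos t).le)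

lemma stdCdf_pos (x : ℝ) : 0 < stdCdf x := by
  rw [stdCdf, setIntegral_pos_iff_support_of_nonneg_ae
    (Filter.Eventually.of_forall fun t => (stdPdf_pos t).le) integrable_stdPdf.integrableOn]
  have : Function.support stdPdf = Set.univ := by
    ext t; simp [Function.mem_support, (stdPdf_pos t).ne']
  rw [this, Set.univ_inter]
  simp [Real.volume_Iic]

lemma hasDerivAt_stdCdf (x : ℝ) : HasDerivAt stdCdf (stdPdf x) x := by
  have key : ∀ y : ℝ, stdCdf y = stdCdf 0 + ∫ t in (0:ℝ)..y, stdPdf t := by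
    intro y
    rw [stdCdf, stdCdf]
    have := intervalIntegral.integral_Iic_sub_Iic
      (integrable_stdPdf.integrableOn (s := Iic (0:ℝ))) (integrable_stdPdf.integrableOn (s := Iic y))
    linarith [this]
  have h := (continuous_stdPdf.integral_hasStrictDerivAt 0 x).hasDerivAt
  have h2 := (h.const_add (stdCdf 0))
  exact h2.congr_of_eventuallyEq (Filter.Eventually.of_forall fun y => (key y))

lemma continuous_stdCdf : Continuous stdCdf := by
  have : ∀ x : ℝ, HasDerivAt stdCdf (stdPdf x) x := hasDerivAt_stdCdf
  exact continuous_iff_continuousAt.2 fun x => (this x).continuousAt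

lemma hasDerivAt_stdPdf (x : ℝ) : HasDerivAt stdPdf (-x * stdPdf x) x := by
  have h1 : HasDerivAt (fun y : ℝ => -(y^2)/2) (-x) x := by
    have := ((hasDerivAt_pow 2 x).neg.div_const 2)
    simpa using this.congr_deriv (by ring)
  have h2 := (h1.exp).div_const (Real.sqrt (2 * Real.pi))
  have : stdPdf = fun y => Real.exp (-(y^2)/2) / Real.sqrt (2*Real.pi) := rfl
  rw [this]
  exact h2.congr_deriv (by dsimp only; ring)

lemma tendsto_pow_mul_stdPdf_atTop (n : ℕ) :
    Tendsto (fun x => x^n * stdPdf x) atTop (nhds 0) := by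
  have h := rpow_mul_exp_neg_mul_sq_isLittleO_exp_neg (by norm_num : (0:ℝ) < 1/2) n
  simp_rw [Real.rpow_natCast] at h
  have h2 : Tendsto (fun x : ℝ => Real.exp (-(1/2) * x)) atTop (nhds 0) := by
    apply Real.tendsto_exp_atBot.comp
    exact Filter.Tendsto.const_mul_atTop_of_neg (by norm_num) tendsto_id
  have h3 : Tendsto (fun x : ℝ => x^n * Real.exp (-(1/2) * x^2)) atTop (nhds 0) :=
    h.trans_tendsto h2
  have heq : (fun x => x^n * stdPdf x)
      = fun x => (Real.sqrt (2*Real.pi))⁻¹ * (x^n * Real.exp (-(1/2) * x^2)) := by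
    funext x; simp only [stdPdf]; ring_nf
  rw [heq]
  simpa using h3.const_mul (Real.sqrt (2*Real.pi))⁻¹

lemma stdPdf_even (x : ℝ) : stdPdf (-x) = stdPdf x := by
  simp [stdPdf]

lemma tendsto_pow_mul_stdPdf_atBot (n : ℕ) :
    Tendsto (fun x => x^n * stdPdf x) atBot (nhds 0) := by
  have h := (tendsto_pow_mul_stdPdf_atTop n).comp tendsto_neg_atBot_atTop
  have he : (fun x : ℝ => (-x)^n * stdPdf (-x)) = fun x => (-1:ℝ)^n * (x^n * stdPdf x) := by
    funext x; rw [stdPdf_even, neg_pow]; ring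
  have h' : Tendsto (fun x : ℝ => (-1:ℝ)^n * (x^n * stdPdf x)) atBot (nhds 0) := by
    rw [← he]; exact h
  have := h'.const_mul ((-1:ℝ)^n)
  simp only [← mul_assoc, ← mul_pow, neg_mul_neg, one_mul, one_pow, mul_zero] at this
  exact this

lemma tendsto_stdPdf_atTop : Tendsto stdPdf atTop (nhds 0) := by
  simpa using tendsto_pow_mul_stdPdf_atTop 0
lemma tendsto_stdPdf_atBot : Tendsto stdPdf atBot (nhds 0) := by
  simpa using tendsto_pow_mul_stdPdf_atBot 0

/-- Gaussian moments -/
lemma integral_mul_stdPdf : ∫ x, x * stdPdf x = 0 := by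
  have hder : ∀ x : ℝ, HasDerivAt (fun y => -stdPdf y) (x * stdPdf x) x := fun x => by
    exact (hasDerivAt_stdPdf x).neg.congr_deriv (by ring)
  have hint : Integrable (fun x : ℝ => x * stdPdf x) := by
    simpa using integrable_pow_mul_stdPdf 1
  have := integral_of_hasDerivAt_of_tendsto hder hint
    (tendsto_stdPdf_atBot.neg) (tendsto_stdPdf_atTop.neg)
  simpa using this

lemma integral_sq_mul_stdPdf : ∫ x, x^2 * stdPdf x = 1 := by
  have hder : ∀ x : ℝ, HasDerivAt (fun y => -(y * stdPdf y))
      (x^2 * stdPdf x - stdPdf x) x := fun x => by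
    have := ((hasDerivAt_id x).mul (hasDerivAt_stdPdf x)).neg
    exact this.congr_deriv (by simp only [id_eq]; ring)
  have hint : Integrable (fun x : ℝ => x^2 * stdPdf x - stdPdf x) :=
    (integrable_pow_mul_stdPdf 2).sub integrable_stdPdf
  have hb : Tendsto (fun y => -(y * stdPdf y)) atBot (nhds 0) := by
    simpa using (tendsto_pow_mul_stdPdf_atBot 1).neg
  have ht : Tendsto (fun y => -(y * stdPdf y)) atTop (nhds 0) := by
    simpa using (tendsto_pow_mul_stdPdf_atTop 1).neg
  have h0 := integral_of_hasDerivAt_of_tendsto hder hint hb ht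
  rw [integral_sub (integrable_pow_mul_stdPdf 2) integrable_stdPdf, integral_stdPdf] at h0
  linarith

/-- shifted/scaled gaussian integrals -/
lemma integral_stdPdf_shift (a c : ℝ) (hc : 0 < c) : ∫ y, stdPdf ((y + a)/c) = c := by
  have h1 : ∫ y, stdPdf ((y + a)/c) = ∫ y, stdPdf (y/c) := by
    have := integral_add_right_eq_self (μ := volume) (fun y : ℝ => stdPdf (y/c)) a
    simpa using this
  rw [h1, Measure.integral_comp_div stdPdf c, integral_stdPdf, abs_of_pos hc, smul_eq_mul, mul_one]

lemma integrable_stdPdf_shift (a c : ℝ) (hc : 0 < c) :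
    Integrable (fun y => stdPdf ((y + a)/c)) := by
  have := (integrable_stdPdf.comp_div hc.ne' (g := stdPdf)).comp_add_right a
  simpa using this

lemma integral_sq_add_two_stdPdf_shift (a c : ℝ) (hc : 0 < c) :
    ∫ y, (y^2 + 2) * stdPdf ((y + a)/c) = c * (c^2 + a^2 + 2) := by
  have h1 : ∫ y, (y^2 + 2) * stdPdf ((y + a)/c)
      = ∫ y, ((y - a)^2 + 2) * stdPdf (y/c) := by
    have := integral_add_right_eq_self (μ := volume)
      (fun y : ℝ => ((y - a)^2 + 2) * stdPdf (y/c)) a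
    simp only [add_sub_cancel_right] at this
    rw [← this]
  have h2 : ∫ y, ((y - a)^2 + 2) * stdPdf (y/c)
      = c * ∫ u, ((c*u - a)^2 + 2) * stdPdf u := by
    have := Measure.integral_comp_div (fun u : ℝ => ((c*u - a)^2 + 2) * stdPdf u) c
    simp only [mul_div_cancel₀ _ hc.ne', smul_eq_mul, abs_of_pos hc] at this
    rw [← this]
  have h3 : ∫ u, ((c*u - a)^2 + 2) * stdPdf u = c^2 + a^2 + 2 := by
    have expand : (fun u : ℝ => ((c*u - a)^2 + 2) * stdPdf u)
        = fun u => c^2 * (u^2 * stdPdf u) + ((-2*a*c) * (u * stdPdf u) + (a^2+2) * stdPdf u) := by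
      funext u; ring
    rw [expand, integral_add, integral_add]
    · rw [MeasureTheory.integral_const_mul, MeasureTheory.integral_const_mul,
        MeasureTheory.integral_const_mul, integral_sq_mul_stdPdf, integral_mul_stdPdf,
        integral_stdPdf]
      ring
    · exact ((integrable_pow_mul_stdPdf 1).congr (by filter_upwards with x; simp)).const_mul _
    · exact integrable_stdPdf.const_mul _
    · exact (integrable_pow_mul_stdPdf 2).const_mul _
    · apply Integrable.add
      · exact ((integrable_pow_mul_stdPdf 1).congr (by filter_upwards with x; simp)).const_mul _
      · exact integrable_stdPdf.const_mul _
  rw [h1, h2, h3]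

lemma integrable_sq_add_two_stdPdf_shift (a c : ℝ) (hc : 0 < c) :
    Integrable (fun y => (y^2 + 2) * stdPdf ((y + a)/c)) := by
  have base : Integrable (fun u : ℝ => ((c*u - a)^2 + 2) * stdPdf u) := by
    have expand : (fun u : ℝ => ((c*u - a)^2 + 2) * stdPdf u)
        = fun u => c^2 * (u^2 * stdPdf u) + ((-2*a*c) * (u * stdPdf u) + (a^2+2) * stdPdf u) := by
      funext u; ring
    rw [expand]
    refine ((integrable_pow_mul_stdPdf 2).const_mul _).add (Integrable.add ?_ ?_)
    · exact ((integrable_pow_mul_stdPdf 1).congr (by filter_upwards with x; simp)).const_mul _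
    · exact integrable_stdPdf.const_mul _
  have h := (base.comp_div hc.ne').comp_add_right a
  apply h.congr
  filter_upwards with y
  simp [mul_div_cancel₀ _ hc.ne']

lemma stdPdf_mul_eq (δ τ c : ℝ) (hc : 0 < c) (hc2 : c^2 = 1 - δ^2) (y : ℝ) :
    stdPdf ((τ + δ*y)/c) * stdPdf y = stdPdf τ * stdPdf ((y + τ*δ)/c) := by
  have hc0 : c ≠ 0 := hc.ne'
  simp only [stdPdf, div_mul_div_comm, ← Real.exp_add]
  congr 1
  congr 1
  field_simp
  linear_combination (τ^2 - y^2) * hc2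

section core
variable (δ τ c : ℝ) (hc : 0 < c) (hc2 : c^2 = 1 - δ^2)

lemma hasDerivAt_u (y : ℝ) :
    HasDerivAt (fun y => stdCdf ((τ + δ*y)/c)) (δ/c * stdPdf ((τ + δ*y)/c)) y := by
  have hinner : HasDerivAt (fun y : ℝ => (τ + δ*y)/c) (δ/c) y := by
    simpa using (((hasDerivAt_id y).const_mul δ).const_add τ).div_const c
  have := (hasDerivAt_stdCdf ((τ + δ*y)/c)).comp y hinner
  exact this.congr_deriv (by ring)

include hc hc2 in
lemma core_first :
    ∫ y, y * (stdCdf ((τ + δ*y)/c) * stdPdf y) = δ * stdPdf τ := by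
  set u : ℝ → ℝ := fun y => stdCdf ((τ + δ*y)/c) with hu_def
  set u' : ℝ → ℝ := fun y => δ/c * stdPdf ((τ + δ*y)/c) with hu'_def
  set v : ℝ → ℝ := fun y => -stdPdf y with hv_def
  set v' : ℝ → ℝ := fun y => y * stdPdf y with hv'_def
  have hu : ∀ y, HasDerivAt u (u' y) y := hasDerivAt_u δ τ c
  have hv : ∀ y, HasDerivAt v (v' y) y := fun y => by
    exact (hasDerivAt_stdPdf y).neg.congr_deriv (by simp only [hv'_def]; ring)
  have huv' : Integrable (u * v') := by
    apply (integrable_pow_mul_stdPdf 1).mono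
    · apply AEStronglyMeasurable.mul _ ((continuous_id.mul continuous_stdPdf).aestronglyMeasurable)
      exact (continuous_stdCdf.comp (by fun_prop)).aestronglyMeasurable
    · filter_upwards with y
      simp only [Pi.mul_apply, norm_mul, pow_one, hu_def, hv'_def]
      have h1 : ‖stdCdf ((τ + δ*y)/c)‖ ≤ 1 := by
        rw [Real.norm_eq_abs]
        exact abs_le.2 ⟨by linarith [stdCdf_nonneg ((τ + δ*y)/c)], stdCdf_le_one _⟩
      exact mul_le_of_le_one_left (by positivity) h1
  have key : ∀ y, u' y * v y = -(δ/c * stdPdf τ) * stdPdf ((y + τ*δ)/c) := by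
    intro y
    simp only [hu'_def, hv_def]
    have h := stdPdf_mul_eq δ τ c hc hc2 y
    linear_combination -(δ/c) * h
  have hu'v : Integrable (u' * v) := by
    have := (integrable_stdPdf_shift (τ*δ) c hc).const_mul (-(δ/c * stdPdf τ))
    apply this.congr
    filter_upwards with y
    rw [Pi.mul_apply, key y]
  have hbound : ∀ y, ‖(u * v) y‖ ≤ stdPdf y := by
    intro y
    simp only [Pi.mul_apply, hu_def, hv_def, norm_mul, norm_neg]
    simp only [Real.norm_eq_abs, abs_of_pos (stdPdf_pos y)]
    have h1 : |stdCdf ((τ + δ*y)/c)| ≤ 1 :=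
      abs_le.2 ⟨by linarith [stdCdf_nonneg ((τ + δ*y)/c)], stdCdf_le_one _⟩
    exact mul_le_of_le_one_left (stdPdf_pos y).le h1
  have h_bot : Tendsto (u * v) atBot (nhds 0) :=
    squeeze_zero_norm hbound tendsto_stdPdf_atBot
  have h_top : Tendsto (u * v) atTop (nhds 0) :=
    squeeze_zero_norm hbound tendsto_stdPdf_atTop
  have ibp := integral_mul_deriv_eq_deriv_mul (fun y _ => hu y) (fun y _ => hv y) huv' hu'v h_bot h_top
  have hlhs : ∫ y, u y * v' y = ∫ y, y * (stdCdf ((τ + δ*y)/c) * stdPdf y) := by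
    congr 1; funext y; simp only [hu_def, hv'_def]; ring
  have hrhs : ∫ y, u' y * v y = -(δ * stdPdf τ) := by
    have : ∫ y, u' y * v y = ∫ y, -(δ/c * stdPdf τ) * stdPdf ((y + τ*δ)/c) := by
      congr 1; funext y; exact key y
    rw [this, MeasureTheory.integral_const_mul, integral_stdPdf_shift (τ*δ) c hc]
    field_simp
  rw [hlhs] at ibp
  rw [ibp, hrhs]
  ring
include hc hc2 in
lemma core_third :
    ∫ y, y^3 * (stdCdf ((τ + δ*y)/c) * stdPdf y) = δ * stdPdf τ * (c^2 + τ^2*δ^2 + 2) := by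
  set u : ℝ → ℝ := fun y => stdCdf ((τ + δ*y)/c) with hu_def
  set u' : ℝ → ℝ := fun y => δ/c * stdPdf ((τ + δ*y)/c) with hu'_def
  set v : ℝ → ℝ := fun y => -((y^2 + 2) * stdPdf y) with hv_def
  set v' : ℝ → ℝ := fun y => y^3 * stdPdf y with hv'_def
  have hu : ∀ y, HasDerivAt u (u' y) y := hasDerivAt_u δ τ c
  have hv : ∀ y, HasDerivAt v (v' y) y := fun y => by
    have h1 : HasDerivAt (fun y : ℝ => (y^2 + 2) * stdPdf y)
        ((2*y) * stdPdf y + (y^2 + 2) * (-y * stdPdf y)) y := by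
      exact (((hasDerivAt_pow 2 y).add_const 2).mul (hasDerivAt_stdPdf y)).congr_deriv (by
        simp)
    have := h1.neg
    apply this.congr_deriv
    simp only [hv'_def]; ring
  have hcdf_bound : ∀ z : ℝ, ‖stdCdf z‖ ≤ 1 := fun z => by
    rw [Real.norm_eq_abs]
    exact abs_le.2 ⟨by linarith [stdCdf_nonneg z], stdCdf_le_one z⟩
  have huv' : Integrable (u * v') := by
    apply (integrable_pow_mul_stdPdf 3).mono
    · apply AEStronglyMeasurable.mul _ (((continuous_pow 3).mul continuous_stdPdf).aestronglyMeasurable)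
      exact (continuous_stdCdf.comp (by fun_prop)).aestronglyMeasurable
    · filter_upwards with y
      simp only [Pi.mul_apply, norm_mul, hu_def, hv'_def]
      exact mul_le_of_le_one_left (by positivity) (hcdf_bound _)
  have key : ∀ y, u' y * v y = -(δ/c * stdPdf τ) * ((y^2 + 2) * stdPdf ((y + τ*δ)/c)) := by
    intro y
    simp only [hu'_def, hv_def]
    have h := stdPdf_mul_eq δ τ c hc hc2 y
    linear_combination -(δ/c) * (y^2 + 2) * h
  have hu'v : Integrable (u' * v) := by
    have := (integrable_sq_add_two_stdPdf_shift (τ*δ) c hc).const_mul (-(δ/c * stdPdf τ))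
    apply this.congr
    filter_upwards with y
    rw [Pi.mul_apply, key y]
  have hbound : ∀ y, ‖(u * v) y‖ ≤ y^2 * stdPdf y + 2 * stdPdf y := by
    intro y
    simp only [Pi.mul_apply, hu_def, hv_def, norm_mul, norm_neg]
    have h2 : ‖y^2 + 2‖ * ‖stdPdf y‖ = y^2 * stdPdf y + 2 * stdPdf y := by
      rw [Real.norm_eq_abs, Real.norm_eq_abs, abs_of_nonneg (by positivity : (0:ℝ) ≤ y^2+2),
        abs_of_nonneg (stdPdf_pos y).le]
      ring
    calc ‖stdCdf ((τ + δ*y)/c)‖ * (‖y^2 + 2‖ * ‖stdPdf y‖)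
        ≤ 1 * (‖y^2 + 2‖ * ‖stdPdf y‖) :=
          mul_le_mul_of_nonneg_right (hcdf_bound _) (by positivity)
      _ = y^2 * stdPdf y + 2 * stdPdf y := by rw [one_mul, h2]
  have hlim : Tendsto (fun y : ℝ => y^2 * stdPdf y + 2 * stdPdf y) atBot (nhds 0) ∧
      Tendsto (fun y : ℝ => y^2 * stdPdf y + 2 * stdPdf y) atTop (nhds 0) := by
    constructor
    · simpa using (tendsto_pow_mul_stdPdf_atBot 2).add ((tendsto_stdPdf_atBot).const_mul 2)
    · simpa using (tendsto_pow_mul_stdPdf_atTop 2).add ((tendsto_stdPdf_atTop).const_mul 2)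
  have h_bot : Tendsto (u * v) atBot (nhds 0) := squeeze_zero_norm hbound hlim.1
  have h_top : Tendsto (u * v) atTop (nhds 0) := squeeze_zero_norm hbound hlim.2
  have ibp := integral_mul_deriv_eq_deriv_mul (fun y _ => hu y) (fun y _ => hv y) huv' hu'v h_bot h_top
  have hlhs : ∫ y, u y * v' y = ∫ y, y^3 * (stdCdf ((τ + δ*y)/c) * stdPdf y) := by
    congr 1; funext y; simp only [hu_def, hv'_def]; ring
  have hrhs : ∫ y, u' y * v y = -(δ/c * stdPdf τ) * (c * (c^2 + (τ*δ)^2 + 2)) := by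
    have : ∫ y, u' y * v y = ∫ y, -(δ/c * stdPdf τ) * ((y^2+2) * stdPdf ((y + τ*δ)/c)) := by
      congr 1; funext y; exact key y
    rw [this, MeasureTheory.integral_const_mul, integral_sq_add_two_stdPdf_shift (τ*δ) c hc]
  rw [hlhs] at ibp
  rw [ibp, hrhs]
  field_simp
  ring
end core

/-- First and third moments of the extended skew-normal distribution. -/
theorem extended_skew_normal_moments (σ δ τ : ℝ) (hσ : 0 < σ)
    (hδ : δ ∈ Set.Ioo (-1 : ℝ) 1) :
    let f : ℝ → ℝ := fun x =>
      stdCdf ((τ + δ*x/σ) / Real.sqrt (1 - δ^2)) / stdCdf τ * ((1/σ) * stdPdf (x/σ))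
    (∫ x : ℝ, x * f x) = σ*δ * stdPdf τ / stdCdf τ ∧
    (∫ x : ℝ, x^3 * f x)
      = (σ*δ)^3 * (τ^2 - 1) * stdPdf τ / stdCdf τ + 3*σ^2*(σ*δ) * stdPdf τ / stdCdf τ := by
  intro f
  obtain ⟨hδ1, hδ2⟩ := hδ
  have hδsq : δ^2 < 1 := by nlinarith
  set c := Real.sqrt (1 - δ^2) with hc_def
  have hc : 0 < c := Real.sqrt_pos.2 (by linarith)
  have hc2 : c^2 = 1 - δ^2 := Real.sq_sqrt (by linarith)
  have hΦ : 0 < stdCdf τ := stdCdf_pos τ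
  have hf : f = fun x => stdCdf ((τ + δ*x/σ) / c) / stdCdf τ * ((1/σ) * stdPdf (x/σ)) := rfl
  have key : ∀ k : ℕ, (∫ x, x^k * (stdCdf ((τ + δ*x/σ)/c) * stdPdf (x/σ)))
      = σ^k * (σ * ∫ y, y^k * (stdCdf ((τ + δ*y)/c) * stdPdf y)) := by
    intro k
    have hcomp := Measure.integral_comp_div
      (fun y : ℝ => y^k * (stdCdf ((τ + δ*y)/c) * stdPdf y)) σ
    rw [abs_of_pos hσ, smul_eq_mul] at hcomp
    calc ∫ x, x^k * (stdCdf ((τ + δ*x/σ)/c) * stdPdf (x/σ))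
        = ∫ x, σ^k * ((x/σ)^k * (stdCdf ((τ + δ*(x/σ))/c) * stdPdf (x/σ))) := by
          congr 1; funext x
          rw [mul_div_assoc]
          set C := stdCdf ((τ + δ*(x/σ))/c)
          set P := stdPdf (x/σ)
          rw [div_pow]
          field_simp
      _ = σ^k * ∫ x, (x/σ)^k * (stdCdf ((τ + δ*(x/σ))/c) * stdPdf (x/σ)) :=
          MeasureTheory.integral_const_mul _ _
      _ = σ^k * (σ * ∫ y, y^k * (stdCdf ((τ + δ*y)/c) * stdPdf y)) := by rw [hcomp]
  constructor
  · have e1 : ∫ x, x * f x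
        = (stdCdf τ)⁻¹ * ((1/σ) * ∫ x, x^1 * (stdCdf ((τ + δ*x/σ)/c) * stdPdf (x/σ))) := by
      rw [← MeasureTheory.integral_const_mul, ← MeasureTheory.integral_const_mul]
      congr 1; funext x
      rw [hf]
      simp only [pow_one]
      field_simp
    rw [e1, key 1]
    simp only [pow_one]
    rw [core_first δ τ c hc hc2]
    field_simp
  · have e3 : ∫ x, x^3 * f x
        = (stdCdf τ)⁻¹ * ((1/σ) * ∫ x, x^3 * (stdCdf ((τ + δ*x/σ)/c) * stdPdf (x/σ))) := by
      rw [← MeasureTheory.integral_const_mul, ← MeasureTheory.integral_const_mul]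
      congr 1; funext x
      rw [hf]
      field_simp
    rw [e3, key 3, core_third δ τ c hc hc2, hc2]
    field_simp
    ring
end
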